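/- Let p be a binary word with exactly 1 run, of length l. If l = 1 (i.e., p = 0 or p = 1), then p does not have an internal zero at any n ≥ 0. If l ≥ 2, then p has an internal zero at every n ≥ l + 1. -/

import Mathlib

/-! A word with one run is `bˡ`. Writing `c` for the number of letters `b` in `w`, the occurrences of `bˡ` in `w` are the
`l`-subsets of those letters, so `c_{bˡ}(w) = (c choose l)`, and `c` ranges over `0, …, n`.
For `l = 1` the attained values form the interval `[0, n]`; for `l ≥ 2` the values `1` and
`l + 1` are attained (at `c = l` and `c = l + 1`) but `2` never is. -/

/-- `occ p w` is the number of occurrences of `p` as a subsequence of `w`,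
i.e. the number of choices of indices `i₁ < ⋯ < i_l` in `w` matching `p`. -/
def occ (p w : List Bool) : ℕ := w.sublists.count p

/-- `B n p k` is the number of binary words of length `n` with exactly `k` occurrences of `p`. -/
noncomputable def B (n : ℕ) (p : List Bool) (k : ℕ) : ℕ :=
  Nat.card {w : List Bool // w.length = n ∧ occ p w = k}

/-- The list of runs (maximal blocks of consecutive equal letters) of a binary word. -/
def runs (p : List Bool) : List (List Bool) := p.splitBy (· == ·)

/-- The number of runs of a binary word. -/
def numRuns (p : List Bool) : ℕ := (runs p).length

/-- The number of runs of size `i` of a binary word. -/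
def numRunsOfSize (p : List Bool) (i : ℕ) : ℕ := ((runs p).map List.length).count i

/-- `maxOcc n p` is the maximum number of occurrences of `p` among binary words of length `n`. -/
noncomputable def maxOcc (n : ℕ) (p : List Bool) : ℕ :=
  sSup {k | ∃ w : List Bool, w.length = n ∧ occ p w = k}

/-- `p` has an internal zero at `n` if the sequence `(B n p k)_{k ≥ 0}` has an internal zero. -/
def HasInternalZeroAt (p : List Bool) (n : ℕ) : Prop :=
  ∃ k₁ k₂ k₃ : ℕ, k₁ < k₂ ∧ k₂ < k₃ ∧ B n p k₁ ≠ 0 ∧ B n p k₂ = 0 ∧ B n p k₃ ≠ 0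

theorem eq_replicate_of_numRuns_eq_one {p : List Bool} (hp : numRuns p = 1) :
    ∃ b, p = List.replicate p.length b := by
  obtain ⟨g, hg⟩ := List.length_eq_one_iff.mp hp
  obtain ⟨hpg, hne, hchain, -⟩ := List.splitBy_eq_iff.mp hg
  have hchain : g.IsChain (· = ·) := (hchain g (List.mem_singleton_self g)).imp fun _ _ ↦ eq_of_beq
  rw [List.flatten_singleton] at hpg
  subst hpg
  obtain ⟨a, t, rfl⟩ := List.exists_cons_of_ne_nil (by simpa [eq_comm] using hne)
  refine ⟨a, ?_⟩
  rw [List.length_cons, List.replicate_succ, ← List.isChain_cons_eq_iff_eq_replicate.mp hchain]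

theorem occ_eq_count_sublists' (p w : List Bool) : occ p w = w.sublists'.count p :=
  (List.sublists_perm_sublists' w).count_eq p

theorem occ_nil_left (w : List Bool) : occ [] w = 1 := by
  induction w with
  | nil => rfl
  | cons a w ih =>
    rw [occ_eq_count_sublists'] at ih ⊢
    rw [List.sublists'_cons, List.count_append, ih, List.count_eq_zero.mpr (by simp)]

theorem occ_cons_cons (a c : Bool) (p w : List Bool) :
    occ (a :: p) (c :: w) = occ (a :: p) w + if c = a then occ p w else 0 := by
  simp only [occ_eq_count_sublists', List.sublists'_cons, List.count_append]
  split_ifs with hca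
  · subst hca
    rw [List.count_map_of_injective _ _ List.cons_injective]
  · exact congrArg _ (List.count_eq_zero.mpr (by simp [hca]))

theorem occ_replicate (b : Bool) (l : ℕ) (w : List Bool) :
    occ (List.replicate l b) w = (w.count b).choose l := by
  induction w generalizing l with
  | nil => cases l <;> rfl
  | cons c w ih =>
    cases l with
    | zero => rw [List.replicate_zero, Nat.choose_zero_right, occ_nil_left]
    | succ l =>
      rw [List.replicate_succ, occ_cons_cons, ← List.replicate_succ, ih, ih, List.count_cons]
      by_cases hcb : c = b <;> simp [hcb, Nat.choose_succ_succ', Nat.add_comm]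

theorem B_ne_zero_iff {n : ℕ} {p : List Bool} {k : ℕ} :
    B n p k ≠ 0 ↔ ∃ w : List Bool, w.length = n ∧ occ p w = k := by
  have hfin : {w : List Bool | w.length = n ∧ occ p w = k}.Finite :=
    (List.finite_length_eq Bool n).subset fun _ hw ↦ hw.1
  rw [B, Nat.card_ne_zero, nonempty_subtype]
  exact ⟨And.left, fun h ↦ ⟨h, hfin.to_subtype⟩⟩

theorem exists_length_eq_count_eq (b : Bool) {n c : ℕ} (hc : c ≤ n) :
    ∃ w : List Bool, w.length = n ∧ w.count b = c :=
  ⟨List.replicate c b ++ List.replicate (n - c) (!b), by simp [hc], by simp [List.count_replicate]⟩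

theorem B_replicate_ne_zero_iff {n l k : ℕ} {b : Bool} :
    B n (List.replicate l b) k ≠ 0 ↔ ∃ c ≤ n, c.choose l = k := by
  simp only [B_ne_zero_iff, occ_replicate]
  constructor
  · rintro ⟨w, rfl, hw⟩
    exact ⟨w.count b, List.count_le_length, hw⟩
  · rintro ⟨c, hc, rfl⟩
    obtain ⟨w, hwn, hwc⟩ := exists_length_eq_count_eq b hc
    exact ⟨w, hwn, by rw [hwc]⟩

theorem Nat.choose_ne_two {l : ℕ} (hl : 2 ≤ l) (c : ℕ) : c.choose l ≠ 2 := by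
  rcases lt_trichotomy c l with hcl | rfl | hlc
  · simp [Nat.choose_eq_zero_of_lt hcl]
  · simp
  · have := Nat.choose_le_choose l hlc
    rw [Nat.choose_succ_self_right] at this
    omega

theorem one_run_internalZeros (p : List Bool) (l : ℕ) (hl : p.length = l)
    (hp : numRuns p = 1) :
    (l = 1 → ∀ n : ℕ, ¬ HasInternalZeroAt p n) ∧
    (2 ≤ l → ∀ n : ℕ, l + 1 ≤ n → HasInternalZeroAt p n) := by
  obtain ⟨b, hb⟩ := eq_replicate_of_numRuns_eq_one hp
  rw [hl] at hb
  subst hb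
  constructor
  · rintro rfl n ⟨k₁, k₂, k₃, -, hk₂₃, -, hB₂, hB₃⟩
    obtain ⟨c, hcn, rfl⟩ := B_replicate_ne_zero_iff.mp hB₃
    rw [Nat.choose_one_right] at hk₂₃
    exact B_replicate_ne_zero_iff.mpr ⟨k₂, by omega, Nat.choose_one_right k₂⟩ hB₂
  · intro hl₂ n hn
    refine ⟨1, 2, l + 1, one_lt_two, by omega, ?_, ?_, ?_⟩
    · exact B_replicate_ne_zero_iff.mpr ⟨l, by omega, Nat.choose_self l⟩
    · by_contra hB₂
      obtain ⟨c, -, hc⟩ := B_replicate_ne_zero_iff.mp hB₂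
      exact Nat.choose_ne_two hl₂ c hc
    · exact B_replicate_ne_zero_iff.mpr ⟨l + 1, hn, Nat.choose_succ_self_right l⟩
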